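/- arXiv:1806.04842 — 3 statements merged into one kernel-verified Lean document; each statement's English description precedes it below -/
import Mathlib

section
/- Per-step energy estimate for the backward Euler scheme: Suppose a sequence (U^n)_{n=0}^N in H and data f^1,…,f^N ∈ H satisfy, for every 1 ≤ n ≤ N and every v ∈ H, ((U^n − U^{n−1})/Δt, v) + A(U^n, v) + Δt Σ_{i=1}^n ω_{n,i} B(U^i, v) = (f^n, v). Then for every 1 ≤ n ≤ N: ‖U^n‖² + ‖U^n − U^{n−1}‖² + ν₀ Δt ‖U^n‖₁² ≤ ‖U^{n−1}‖² + (μ₀² K₁² t_n / ν₀) Δt² Σ_{i=1}^n ‖U^i‖₁² + Δt ‖f^n‖² + Δt ‖U^n‖². -/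
open scoped BigOperators RealInnerProductSpace

/-!
Test the scheme at step `n` with `v = Uⁿ`. The polarization identity
`2 (a - b, a) = ‖a‖² - ‖b‖² + ‖a - b‖²` turns the discrete time derivative into the energy
increment; coercivity of `A` produces `ν₀ ‖Uⁿ‖₁²` on the left, Cauchy–Schwarz for `(fⁿ, Uⁿ)` gives
`‖fⁿ‖² + ‖Uⁿ‖²`, and the memory term is bounded by `μ₀ K₁ (∑ᵢ ‖Uⁱ‖₁) ‖Uⁿ‖₁` and split by
Young's inequality with weight `ν₀`, half of the coercivity term absorbing it. The finite
Cauchy–Schwarz inequality `(∑ᵢ ‖Uⁱ‖₁)² ≤ n ∑ᵢ ‖Uⁱ‖₁²` produces the factor `t_n = n Δt`.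
-/

section InnerProduct

variable {H : Type*} [NormedAddCommGroup H] [InnerProductSpace ℝ H]

theorem two_mul_inner_sub_left_self (x y : H) :
    2 * ⟪x - y, x⟫ = ‖x‖ ^ 2 - ‖y‖ ^ 2 + ‖x - y‖ ^ 2 := by
  rw [inner_sub_left, real_inner_self_eq_norm_sq, real_inner_comm, norm_sub_sq_real]
  ring

theorem two_mul_inner_le_norm_sq_add_norm_sq (x y : H) :
    2 * ⟪x, y⟫ ≤ ‖x‖ ^ 2 + ‖y‖ ^ 2 :=
  calc 2 * ⟪x, y⟫ ≤ 2 * (‖x‖ * ‖y‖) := by gcongr; exact real_inner_le_norm x y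
    _ ≤ ‖x‖ ^ 2 + ‖y‖ ^ 2 := by linarith [two_mul_le_add_sq ‖x‖ ‖y‖]

theorem energy_identity_of_backward_euler_step {x y g : H} {Δt a : ℝ}
    (hΔt : Δt ≠ 0) (h : ⟪x - y, x⟫ / Δt + a = ⟪g, x⟫) :
    ‖x‖ ^ 2 - ‖y‖ ^ 2 + ‖x - y‖ ^ 2 = 2 * Δt * (⟪g, x⟫ - a) := by
  rw [← two_mul_inner_sub_left_self, ← h]
  field_simp
  ring

end InnerProduct

theorem abs_sum_mul_le_mul_sum_mul {ι X : Type*} (s : Finset ι) (ω : ι → ℝ) (B : X → X → ℝ)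
    (norm1 : X → ℝ) (u : ι → X) (v : X) {K μ : ℝ} (hω : ∀ i ∈ s, |ω i| ≤ K)
    (hB : ∀ x y, |B x y| ≤ μ * norm1 x * norm1 y) :
    |∑ i ∈ s, ω i * B (u i) v| ≤ μ * K * (∑ i ∈ s, norm1 (u i)) * norm1 v :=
  calc |∑ i ∈ s, ω i * B (u i) v| ≤ ∑ i ∈ s, |ω i| * |B (u i) v| := by
        simpa only [abs_mul] using Finset.abs_sum_le_sum_abs (fun i => ω i * B (u i) v) s
    _ ≤ ∑ i ∈ s, K * (μ * norm1 (u i) * norm1 v) := by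
        refine Finset.sum_le_sum fun i hi => ?_
        exact mul_le_mul_of_nonneg (hω i hi) (hB _ _) (abs_nonneg _)
          ((abs_nonneg _).trans (hB _ _))
    _ = μ * K * (∑ i ∈ s, norm1 (u i)) * norm1 v := by
        rw [Finset.mul_sum, Finset.sum_mul]
        exact Finset.sum_congr rfl fun i _ => by ring

/-- Young's inequality with weight `ε`, followed by Cauchy–Schwarz on the sum. -/
theorem two_mul_mul_sum_mul_le {ι : Type*} (s : Finset ι) (a : ι → ℝ) (b c : ℝ) {ε : ℝ}
    (hε : 0 < ε) :
    2 * c * (∑ i ∈ s, a i) * b ≤ c ^ 2 * s.card * (∑ i ∈ s, a i ^ 2) / ε + ε * b ^ 2 := by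
  set T := ∑ i ∈ s, a i
  have hyoung : 2 * (c * T) * b ≤ (c * T) ^ 2 / ε + ε * b ^ 2 := by
    rw [div_add' _ _ _ hε.ne', le_div_iff₀ hε]
    nlinarith [sq_nonneg (c * T - ε * b)]
  have hcs : (c * T) ^ 2 ≤ c ^ 2 * (s.card * ∑ i ∈ s, a i ^ 2) := by
    rw [mul_pow]
    exact mul_le_mul_of_nonneg_left (sq_sum_le_card_mul_sum_sq ..) (sq_nonneg c)
  calc 2 * c * T * b = 2 * (c * T) * b := by ring
    _ ≤ (c * T) ^ 2 / ε + ε * b ^ 2 := hyoung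
    _ ≤ c ^ 2 * (s.card * ∑ i ∈ s, a i ^ 2) / ε + ε * b ^ 2 := by gcongr
    _ = _ := by ring

theorem per_step_energy_estimate_general
    {H : Type*} [NormedAddCommGroup H] [InnerProductSpace ℝ H]
    (norm1 : H → ℝ)
    (A : H →ₗ[ℝ] H →ₗ[ℝ] ℝ) (ν₀ : ℝ) (hν₀ : 0 < ν₀)
    (hcoer : ∀ v, ν₀ * (norm1 v) ^ 2 ≤ A v v)
    (Δt : ℝ) (hΔt : 0 < Δt) (N : ℕ)
    (ω : ℕ → ℕ → ℝ) (K₁ : ℝ)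
    (hω : ∀ n i, 1 ≤ i → i ≤ n → n ≤ N → |ω n i| ≤ K₁)
    (B : H → H → ℝ) (μ₀ : ℝ)
    (hB : ∀ u v, |B u v| ≤ μ₀ * norm1 u * norm1 v)
    (U f : ℕ → H)
    (hscheme : ∀ n, 1 ≤ n → n ≤ N → ∀ v : H,
      ⟪U n - U (n - 1), v⟫ / Δt + A (U n) v
        + Δt * ∑ i ∈ Finset.Icc 1 n, ω n i * B (U i) v = ⟪f n, v⟫) :
    ∀ n, 1 ≤ n → n ≤ N →
      ‖U n‖ ^ 2 + ‖U n - U (n - 1)‖ ^ 2 + ν₀ * Δt * (norm1 (U n)) ^ 2 ≤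
        ‖U (n - 1)‖ ^ 2
          + (μ₀ ^ 2 * K₁ ^ 2 * ((n : ℝ) * Δt) / ν₀) * Δt ^ 2
              * ∑ i ∈ Finset.Icc 1 n, (norm1 (U i)) ^ 2
          + Δt * ‖f n‖ ^ 2 + Δt * ‖U n‖ ^ 2 := by
  intro n hn hnN
  set S := ∑ i ∈ Finset.Icc 1 n, ω n i * B (U i) (U n)
  set T := ∑ i ∈ Finset.Icc 1 n, norm1 (U i)
  have henergy := energy_identity_of_backward_euler_step hΔt.ne'
    (by rw [← add_assoc]; exact hscheme n hn hnN (U n))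
  have hforcing := mul_le_mul_of_nonneg_left
    (two_mul_inner_le_norm_sq_add_norm_sq (f n) (U n)) hΔt.le
  have hcoercive := mul_le_mul_of_nonneg_left (hcoer (U n)) hΔt.le
  have hS : -S ≤ μ₀ * K₁ * T * norm1 (U n) :=
    (neg_le_abs S).trans <| abs_sum_mul_le_mul_sum_mul _ _ B norm1 U (U n)
      (fun i hi => hω n i (Finset.mem_Icc.1 hi).1 (Finset.mem_Icc.1 hi).2 hnN) hB
  have hyoung := two_mul_mul_sum_mul_le (Finset.Icc 1 n) (fun i => norm1 (U i)) (norm1 (U n))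
    (Δt * μ₀ * K₁) hν₀
  rw [Nat.card_Icc, add_tsub_cancel_right] at hyoung
  have hmemory : 2 * Δt ^ 2 * -S ≤ (μ₀ ^ 2 * K₁ ^ 2 * ((n : ℝ) * Δt) / ν₀) * Δt ^ 2
      * ∑ i ∈ Finset.Icc 1 n, (norm1 (U i)) ^ 2 + ν₀ * Δt * norm1 (U n) ^ 2 :=
    calc 2 * Δt ^ 2 * -S ≤ 2 * Δt ^ 2 * (μ₀ * K₁ * T * norm1 (U n)) := by gcongr
      _ = Δt * (2 * (Δt * μ₀ * K₁) * T * norm1 (U n)) := by ring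
      _ ≤ Δt * ((Δt * μ₀ * K₁) ^ 2 * n * (∑ i ∈ Finset.Icc 1 n, norm1 (U i) ^ 2) / ν₀
          + ν₀ * norm1 (U n) ^ 2) := by gcongr
      _ = _ := by ring
  linarith

/-- Per-step energy estimate (3.4) for the backward Euler scheme. -/
theorem per_step_energy_estimate
    {H : Type*} [NormedAddCommGroup H] [InnerProductSpace ℝ H]
    (norm1 : H → ℝ) (hnorm1 : ∀ x, 0 ≤ norm1 x)
    (A : H →ₗ[ℝ] H →ₗ[ℝ] ℝ) (ν₀ : ℝ) (hν₀ : 0 < ν₀)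
    (hcoer : ∀ v, ν₀ * (norm1 v) ^ 2 ≤ A v v)
    (Δt : ℝ) (hΔt : 0 < Δt) (N : ℕ) (hN : 1 ≤ N)
    (ω : ℕ → ℕ → ℝ) (K₁ : ℝ) (hK₁ : 0 < K₁)
    (hω : ∀ n i, 1 ≤ i → i ≤ n → n ≤ N → |ω n i| ≤ K₁)
    (B : H → H → ℝ) (μ₀ : ℝ) (hμ₀ : 0 < μ₀)
    (hB : ∀ u v, |B u v| ≤ μ₀ * norm1 u * norm1 v)
    (U f : ℕ → H)
    (hscheme : ∀ n, 1 ≤ n → n ≤ N → ∀ v : H,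
      ⟪U n - U (n - 1), v⟫ / Δt + A (U n) v
        + Δt * ∑ i ∈ Finset.Icc 1 n, ω n i * B (U i) v = ⟪f n, v⟫) :
    ∀ n, 1 ≤ n → n ≤ N →
      ‖U n‖ ^ 2 + ‖U n - U (n - 1)‖ ^ 2 + ν₀ * Δt * (norm1 (U n)) ^ 2 ≤
        ‖U (n - 1)‖ ^ 2
          + (μ₀ ^ 2 * K₁ ^ 2 * ((n : ℝ) * Δt) / ν₀) * Δt ^ 2
              * ∑ i ∈ Finset.Icc 1 n, (norm1 (U i)) ^ 2
          + Δt * ‖f n‖ ^ 2 + Δt * ‖U n‖ ^ 2 :=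
  per_step_energy_estimate_general norm1 A ν₀ hν₀ hcoer Δt hΔt N ω K₁ hω B μ₀ hB U f hscheme
end

section
/- Stability of the classic fully discrete finite element method (Theorem 3.1): There exists a constant C depending only on T, ν₀, μ₀ and K₁ such that the following holds. Suppose a sequence (U^n)_{n=0}^N in H and data f^1,…,f^N ∈ H satisfy, for every 1 ≤ n ≤ N and every v ∈ H, ((U^n − U^{n−1})/Δt, v) + A(U^n, v) + Δt Σ_{i=1}^n ω_{n,i} B(U^i, v) = (f^n, v). If Δt ≤ min{1/2, 7ν₀²/(8μ₀²K₁²T)}, then for every 1 ≤ n ≤ N: ‖U^n‖ + (Σ_{i=1}^n ‖U^i − U^{i−1}‖²)^{1/2} + (√ν₀/2)(Δt Σ_{i=1}^n ‖U^i‖₁²)^{1/2} ≤ C (‖U^0‖² + Δt Σ_{i=1}^n ‖f^i‖²)^{1/2}. -/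
/-!
Testing the scheme with `v = Uᵏ` gives, for `ρ = K₁²μ₀²T/ν₀²`, the energy inequality
`‖Uᵏ‖² - ‖Uᵏ⁻¹‖² + ‖Uᵏ - Uᵏ⁻¹‖² + ν₀Δt‖Uᵏ‖₁² ≤ Δt (‖fᵏ‖² + ‖Uᵏ‖² + ρν₀Δt ∑_{i ≤ k} ‖Uⁱ‖₁²)`:
the memory term is split by Young's inequality against half of the coercivity term and the
remaining `(∑ᵢ ‖Uⁱ‖₁)²` is bounded by Cauchy–Schwarz and `kΔt ≤ T`. After summing over `k`,
the top-index terms on the right are absorbed into the left since `Δt ≤ 1/2` and `Δtρ ≤ 7/8`,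
and a discrete Grönwall inequality for the rest bounds the energy by `exp((2 + 8ρ)T)` times the
data.
-/

open Finset Real
open scoped RealInnerProductSpace

theorem sum_Icc_sub_pred {M : Type*} [AddCommGroup M] (e : ℕ → M) (m : ℕ) :
    ∑ n ∈ Icc 1 m, (e n - e (n - 1)) = e m - e 0 := by
  induction m with
  | zero => simp
  | succ m ih => rw [sum_Icc_succ_top (by omega), ih]; simp

theorem discrete_gronwall_sum {ψ g : ℕ → ℝ} {c : ℝ} {M : ℕ} (hc : 0 ≤ c) (hg : Monotone g)
    (hψ : ∀ m ≤ M, ψ m ≤ g m + c * ∑ k ∈ range m, ψ k) :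
    ∀ m ≤ M, ψ m ≤ (1 + c) ^ m * g m := by
  intro m
  induction m using Nat.strong_induction_on with
  | _ m ih =>
    intro hm
    have hsum : ∑ k ∈ range m, ψ k ≤ ∑ k ∈ range m, (1 + c) ^ k * g m :=
      sum_le_sum fun k hk => by
        have hkm := mem_range.1 hk
        calc ψ k ≤ (1 + c) ^ k * g k := ih k hkm (by omega)
          _ ≤ (1 + c) ^ k * g m := by gcongr; exact hg hkm.le
    calc ψ m ≤ g m + c * ∑ k ∈ range m, (1 + c) ^ k * g m := (hψ m hm).trans (by gcongr)
      _ = (1 + c) ^ m * g m := by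
        rw [← sum_mul]
        linear_combination g m * geom_sum_mul (1 + c) m

theorem abs_sum_mul_le_of_abs_le {ι : Type*} {s : Finset ι} {w b : ι → ℝ} {K : ℝ}
    (hw : ∀ i ∈ s, |w i| ≤ K) : |∑ i ∈ s, w i * b i| ≤ K * ∑ i ∈ s, |b i| := by
  rw [mul_sum]
  refine (abs_sum_le_sum_abs _ _).trans (sum_le_sum fun i hi => ?_)
  rw [abs_mul]
  exact mul_le_mul_of_nonneg_right (hw i hi) (abs_nonneg _)

theorem two_mul_sq_mul_le_of_mul_sq_le {τ ν P x S A T : ℝ} (hν : 0 < ν) (hτ : 0 ≤ τ)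
    (hS : τ * S ^ 2 ≤ T * A) :
    2 * τ ^ 2 * (P * x * S) ≤ τ * ν * x ^ 2 + τ ^ 2 * (P ^ 2 * T / ν) * A := by
  rw [← mul_le_mul_iff_left₀ hν]
  have hexpand : (τ * ν * x ^ 2 + τ ^ 2 * (P ^ 2 * T / ν) * A) * ν
      = τ * ν ^ 2 * x ^ 2 + τ ^ 2 * P ^ 2 * (T * A) := by
    field_simp
  rw [hexpand]
  nlinarith [mul_nonneg hτ (sq_nonneg (ν * x - τ * P * S)),
    mul_le_mul_of_nonneg_left hS (by positivity : 0 ≤ τ ^ 2 * P ^ 2)]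

def EnergyStep (e d a q : ℕ → ℝ) (τ ρ ν : ℝ) (N : ℕ) : Prop :=
  ∀ k, 1 ≤ k → k ≤ N →
    e k - e (k - 1) + d k + ν * a k ≤ τ * (q k + e k + ρ * ν * ∑ i ∈ Icc 1 k, a i)

/-- The weights `1/2` and `1/8` leave room to absorb the top-index terms of the summed energy
inequality when `τ ≤ 1/2` and `τρ ≤ 7/8`. -/
noncomputable def discreteEnergy (e d a : ℕ → ℝ) (ν : ℝ) (m : ℕ) : ℝ :=
  e m / 2 + ∑ i ∈ Icc 1 m, d i + ν / 8 * ∑ i ∈ Icc 1 m, a i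

theorem discreteEnergy_nonneg {e d a : ℕ → ℝ} {ν : ℝ} (he : ∀ k, 0 ≤ e k)
    (hd : ∀ k, 0 ≤ d k) (ha : ∀ k, 0 ≤ a k) (hν : 0 ≤ ν) (m : ℕ) :
    0 ≤ discreteEnergy e d a ν m := by
  have := he m
  have := sum_nonneg fun i (_ : i ∈ Icc 1 m) => hd i
  have := sum_nonneg fun i (_ : i ∈ Icc 1 m) => ha i
  unfold discreteEnergy
  positivity

namespace EnergyStep

variable {e d a q : ℕ → ℝ} {τ ρ ν : ℝ} {N : ℕ}

theorem sum_le (hstep : EnergyStep e d a q τ ρ ν N) {m : ℕ} (hm : m ≤ N) :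
    e m + ∑ i ∈ Icc 1 m, d i + ν * ∑ i ∈ Icc 1 m, a i
      ≤ e 0 + τ * ∑ i ∈ Icc 1 m, q i
        + τ * ∑ k ∈ Icc 1 m, (e k + ρ * ν * ∑ i ∈ Icc 1 k, a i) := by
  have h := sum_le_sum fun k hk => hstep k (mem_Icc.1 hk).1 ((mem_Icc.1 hk).2.trans hm)
  simp only [sum_add_distrib, ← mul_sum, sum_Icc_sub_pred] at h ⊢
  linarith

theorem discreteEnergy_le_add_mul_sum (hstep : EnergyStep e d a q τ ρ ν N)
    (he : ∀ k, 0 ≤ e k) (hd : ∀ k, 0 ≤ d k) (ha : ∀ k, 0 ≤ a k) (hν : 0 ≤ ν) (hρ : 0 ≤ ρ)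
    (hτ₀ : 0 ≤ τ) (hτ : τ ≤ 1 / 2) (hτρ : τ * ρ ≤ 7 / 8) {m : ℕ} (hm : m ≤ N) :
    discreteEnergy e d a ν m
      ≤ e 0 + τ * ∑ i ∈ Icc 1 m, q i
        + τ * (2 + 8 * ρ) * ∑ k ∈ range m, discreteEnergy e d a ν k := by
  have hD (k : ℕ) : 0 ≤ ∑ i ∈ Icc 1 k, d i := sum_nonneg fun i _ => hd i
  have hA (k : ℕ) : 0 ≤ ν * ∑ i ∈ Icc 1 k, a i := mul_nonneg hν (sum_nonneg fun i _ => ha i)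
  rcases m with _ | p
  · simp only [discreteEnergy, Icc_eq_empty_of_lt zero_lt_one, sum_empty, range_zero]
    linarith [he 0]
  have hsum := hstep.sum_le hm
  rw [sum_Icc_succ_top (by omega) (fun k => e k + ρ * ν * ∑ i ∈ Icc 1 k, a i)] at hsum
  have hterm (k : ℕ) :
      e k + ρ * ν * ∑ i ∈ Icc 1 k, a i ≤ (2 + 8 * ρ) * discreteEnergy e d a ν k := by
    unfold discreteEnergy
    nlinarith [he k, hD k, hA k, mul_nonneg hρ (he k), mul_nonneg hρ (hD k)]
  have hlower : ∑ k ∈ Icc 1 p, (e k + ρ * ν * ∑ i ∈ Icc 1 k, a i)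
      ≤ (2 + 8 * ρ) * ∑ k ∈ range (p + 1), discreteEnergy e d a ν k := by
    rw [mul_sum]
    refine (sum_le_sum fun k _ => hterm k).trans
      (sum_le_sum_of_subset_of_nonneg (fun k hk => ?_) fun k _ _ => ?_)
    · simp only [mem_Icc, mem_range] at hk ⊢; omega
    · have := discreteEnergy_nonneg he hd ha hν k; positivity
  have habsorb_e : τ * e (p + 1) ≤ e (p + 1) / 2 := by nlinarith [he (p + 1)]
  have habsorb_a : τ * (ρ * ν * ∑ i ∈ Icc 1 (p + 1), a i)
      ≤ 7 / 8 * (ν * ∑ i ∈ Icc 1 (p + 1), a i) := by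
    nlinarith [mul_le_mul_of_nonneg_right hτρ (hA (p + 1))]
  have hlower' := mul_le_mul_of_nonneg_left hlower hτ₀
  rw [discreteEnergy]
  linarith

theorem discreteEnergy_le_exp_mul (hstep : EnergyStep e d a q τ ρ ν N)
    (he : ∀ k, 0 ≤ e k) (hd : ∀ k, 0 ≤ d k) (ha : ∀ k, 0 ≤ a k) (hq : ∀ k, 0 ≤ q k)
    (hν : 0 ≤ ν) (hρ : 0 ≤ ρ) (hτ₀ : 0 ≤ τ) (hτ : τ ≤ 1 / 2) (hτρ : τ * ρ ≤ 7 / 8)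
    {m : ℕ} (hm : m ≤ N) :
    discreteEnergy e d a ν m ≤ exp (τ * (2 + 8 * ρ) * m) * (e 0 + τ * ∑ i ∈ Icc 1 m, q i) := by
  have hmono : Monotone fun m => e 0 + τ * ∑ i ∈ Icc 1 m, q i := fun i j hij => by
    dsimp only
    gcongr
    exact fun k _ _ => hq k
  have hG : 0 ≤ e 0 + τ * ∑ i ∈ Icc 1 m, q i := by
    have := he 0
    have := sum_nonneg fun i (_ : i ∈ Icc 1 m) => hq i
    positivity
  calc discreteEnergy e d a ν m
      ≤ (1 + τ * (2 + 8 * ρ)) ^ m * (e 0 + τ * ∑ i ∈ Icc 1 m, q i) :=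
        discrete_gronwall_sum (by positivity) hmono (fun m hm =>
          hstep.discreteEnergy_le_add_mul_sum he hd ha hν hρ hτ₀ hτ hτρ hm) m hm
    _ ≤ exp (τ * (2 + 8 * ρ)) ^ m * (e 0 + τ * ∑ i ∈ Icc 1 m, q i) := by
        gcongr
        linarith [add_one_le_exp (τ * (2 + 8 * ρ))]
    _ = exp (τ * (2 + 8 * ρ) * m) * (e 0 + τ * ∑ i ∈ Icc 1 m, q i) := by
        rw [← exp_nat_mul, mul_comm (m : ℝ)]

theorem stability {ν₀ T : ℝ} {n : ℕ} (hstep : EnergyStep e d a q τ ρ (ν₀ * τ) N)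
    (he : ∀ k, 0 ≤ e k) (hd : ∀ k, 0 ≤ d k) (ha : ∀ k, 0 ≤ a k) (hq : ∀ k, 0 ≤ q k)
    (hν₀ : 0 ≤ ν₀) (hρ : 0 ≤ ρ) (hτ₀ : 0 ≤ τ) (hτ : τ ≤ 1 / 2) (hτρ : τ * ρ ≤ 7 / 8)
    (hn : n ≤ N) (hnT : n * τ ≤ T) :
    √(e n) + √(∑ i ∈ Icc 1 n, d i) + √ν₀ / 2 * √(τ * ∑ i ∈ Icc 1 n, a i)
      ≤ 3 * √(2 * exp ((2 + 8 * ρ) * T)) * √(e 0 + τ * ∑ i ∈ Icc 1 n, q i) := by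
  set E := exp ((2 + 8 * ρ) * T)
  set G := e 0 + τ * ∑ i ∈ Icc 1 n, q i
  have hG : 0 ≤ G := by
    have := he 0
    have := sum_nonneg fun i (_ : i ∈ Icc 1 n) => hq i
    positivity
  have hψ : discreteEnergy e d a (ν₀ * τ) n ≤ E * G :=
    (hstep.discreteEnergy_le_exp_mul he hd ha hq (by positivity) hρ hτ₀ hτ hτρ hn).trans
      (mul_le_mul_of_nonneg_right (exp_le_exp.2 (by nlinarith)) hG)
  unfold discreteEnergy at hψ
  have hD := sum_nonneg fun i (_ : i ∈ Icc 1 n) => hd i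
  have hA := sum_nonneg fun i (_ : i ∈ Icc 1 n) => ha i
  have hνA : 0 ≤ ν₀ * τ * ∑ i ∈ Icc 1 n, a i := by positivity
  have h₁ : √(e n) ≤ √(2 * (E * G)) := sqrt_le_sqrt (by linarith)
  have h₂ : √(∑ i ∈ Icc 1 n, d i) ≤ √(2 * (E * G)) := sqrt_le_sqrt (by linarith [he n])
  have h₃ : √ν₀ / 2 * √(τ * ∑ i ∈ Icc 1 n, a i) ≤ √(2 * (E * G)) := by
    refine le_sqrt_of_sq_le ?_
    rw [mul_pow, div_pow, sq_sqrt hν₀, sq_sqrt (by positivity)]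
    linarith [he n]
  calc _ ≤ 3 * √(2 * (E * G)) := by linarith
    _ = 3 * √(2 * E) * √G := by rw [← mul_assoc, sqrt_mul (by positivity)]; ring

end EnergyStep

section Scheme

variable {H : Type*} [NormedAddCommGroup H] [InnerProductSpace ℝ H]

theorem norm_sq_sub_norm_sq_add_norm_sub_sq_le {u w F : H} {τ b : ℝ} (hτ : 0 < τ)
    (h : ⟪u - w, u⟫ / τ + b = ⟪F, u⟫) :
    ‖u‖ ^ 2 - ‖w‖ ^ 2 + ‖u - w‖ ^ 2 + 2 * τ * b ≤ τ * (‖F‖ ^ 2 + ‖u‖ ^ 2) := by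
  have hpol : 2 * ⟪u - w, u⟫ = ‖u‖ ^ 2 - ‖w‖ ^ 2 + ‖u - w‖ ^ 2 := by
    rw [norm_sub_sq_real, inner_sub_left, real_inner_self_eq_norm_sq, real_inner_comm]
    ring
  have hF : 2 * ⟪F, u⟫ ≤ ‖F‖ ^ 2 + ‖u‖ ^ 2 := by
    nlinarith [real_inner_le_norm F u, two_mul_le_add_sq ‖F‖ ‖u‖]
  have hinner : ⟪u - w, u⟫ = (⟪F, u⟫ - b) * τ := (div_eq_iff hτ.ne').1 (eq_sub_of_add_eq h)
  nlinarith [mul_le_mul_of_nonneg_left hF hτ.le]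

theorem scheme_energy_step {norm1 : H → ℝ} {B : H → H → ℝ} {ω : ℕ → ℝ} {U : ℕ → H} {F : H}
    {a τ ν₀ μ₀ K₁ T : ℝ} {k : ℕ} (hν₀ : 0 < ν₀) (hK₁ : 0 ≤ K₁) (hτ : 0 < τ)
    (hkT : k * τ ≤ T) (ha : ν₀ * norm1 (U k) ^ 2 ≤ a) (hω : ∀ i ∈ Icc 1 k, |ω i| ≤ K₁)
    (hB : ∀ u v, |B u v| ≤ μ₀ * norm1 u * norm1 v)
    (h : ⟪U k - U (k - 1), U k⟫ / τ + a + τ * ∑ i ∈ Icc 1 k, ω i * B (U i) (U k) = ⟪F, U k⟫) :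
    ‖U k‖ ^ 2 - ‖U (k - 1)‖ ^ 2 + ‖U k - U (k - 1)‖ ^ 2 + ν₀ * τ * norm1 (U k) ^ 2
      ≤ τ * (‖F‖ ^ 2 + ‖U k‖ ^ 2
        + K₁ ^ 2 * μ₀ ^ 2 * T / ν₀ ^ 2 * (ν₀ * τ) * ∑ i ∈ Icc 1 k, norm1 (U i) ^ 2) := by
  set M := ∑ i ∈ Icc 1 k, ω i * B (U i) (U k)
  set S := ∑ i ∈ Icc 1 k, norm1 (U i)
  set A := ∑ i ∈ Icc 1 k, norm1 (U i) ^ 2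
  have henergy := norm_sq_sub_norm_sq_add_norm_sub_sq_le hτ (b := a + τ * M) (by rw [← h]; ring)
  have hM : |M| ≤ K₁ * μ₀ * norm1 (U k) * S :=
    calc |M| ≤ K₁ * ∑ i ∈ Icc 1 k, |B (U i) (U k)| := abs_sum_mul_le_of_abs_le hω
      _ ≤ K₁ * ∑ i ∈ Icc 1 k, μ₀ * norm1 (U i) * norm1 (U k) := by
          gcongr with i
          exact hB _ _
      _ = K₁ * μ₀ * norm1 (U k) * S := by
          simp only [S, mul_sum]
          exact sum_congr rfl fun i _ => by ring
  have hCS : τ * S ^ 2 ≤ T * A :=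
    calc τ * S ^ 2 ≤ τ * (k * A) := by
          gcongr
          simpa using sq_sum_le_card_mul_sum_sq (s := Icc 1 k) (f := fun i => norm1 (U i))
      _ ≤ T * A := by
          rw [← mul_assoc]
          gcongr
          linarith
  have hmemory : 2 * τ ^ 2 * -M ≤ 2 * τ ^ 2 * (K₁ * μ₀ * norm1 (U k) * S) :=
    mul_le_mul_of_nonneg_left ((neg_le_abs M).trans hM) (by positivity)
  have hYoung := two_mul_sq_mul_le_of_mul_sq_le (P := K₁ * μ₀) (x := norm1 (U k)) hν₀ hτ.le hCS
  have hρ : K₁ ^ 2 * μ₀ ^ 2 * T / ν₀ ^ 2 * (ν₀ * τ) = (K₁ * μ₀) ^ 2 * T / ν₀ * τ := by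
    field_simp
  rw [hρ]
  linarith [mul_le_mul_of_nonneg_left ha hτ.le]

end Scheme

/-- Stability of the classic fully discrete finite element method (Theorem 3.1). -/
theorem stability_classic_fem
    (T ν₀ μ₀ K₁ : ℝ) (hT : 0 < T) (hν₀ : 0 < ν₀) (hμ₀ : 0 < μ₀) (hK₁ : 0 < K₁) :
    ∃ C : ℝ, 0 < C ∧
      ∀ (H : Type) [NormedAddCommGroup H] [InnerProductSpace ℝ H]
        (norm1 : H → ℝ), (∀ x, 0 ≤ norm1 x) →
      ∀ A : H →ₗ[ℝ] H →ₗ[ℝ] ℝ, (∀ v, ν₀ * (norm1 v) ^ 2 ≤ A v v) →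
      ∀ Δt : ℝ, 0 < Δt → ∀ N : ℕ, 1 ≤ N → (N : ℝ) * Δt = T →
      ∀ ω : ℕ → ℕ → ℝ, (∀ n i, 1 ≤ i → i ≤ n → n ≤ N → |ω n i| ≤ K₁) →
      ∀ B : H → H → ℝ, (∀ u v, |B u v| ≤ μ₀ * norm1 u * norm1 v) →
      ∀ U f : ℕ → H,
        (∀ n, 1 ≤ n → n ≤ N → ∀ v : H,
          ⟪U n - U (n - 1), v⟫ / Δt + A (U n) v
            + Δt * ∑ i ∈ Finset.Icc 1 n, ω n i * B (U i) v = ⟪f n, v⟫) →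
        Δt ≤ min (1 / 2) (7 * ν₀ ^ 2 / (8 * μ₀ ^ 2 * K₁ ^ 2 * T)) →
        ∀ n, 1 ≤ n → n ≤ N →
          ‖U n‖ + Real.sqrt (∑ i ∈ Finset.Icc 1 n, ‖U i - U (i - 1)‖ ^ 2)
            + (Real.sqrt ν₀ / 2)
                * Real.sqrt (Δt * ∑ i ∈ Finset.Icc 1 n, (norm1 (U i)) ^ 2)
          ≤ C * Real.sqrt (‖U 0‖ ^ 2 + Δt * ∑ i ∈ Finset.Icc 1 n, ‖f i‖ ^ 2) := by
  set ρ := K₁ ^ 2 * μ₀ ^ 2 * T / ν₀ ^ 2 with hρ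
  refine ⟨3 * √(2 * exp ((2 + 8 * ρ) * T)), by positivity, ?_⟩
  intro H _ _ norm1 _ A hA Δt hΔt N _ hNΔt ω hω B hB U f hU hΔt_le n _ hnN
  have hkT (k : ℕ) (hk : k ≤ N) : k * Δt ≤ T := hNΔt ▸ by gcongr
  have hΔtρ : Δt * ρ ≤ 7 / 8 := by
    have h := hΔt_le.trans (min_le_right _ _)
    rw [le_div_iff₀ (by positivity)] at h
    rw [hρ, mul_div_assoc', div_le_iff₀ (by positivity)]
    linarith
  have hstep : EnergyStep (fun k => ‖U k‖ ^ 2) (fun k => ‖U k - U (k - 1)‖ ^ 2)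
      (fun k => norm1 (U k) ^ 2) (fun k => ‖f k‖ ^ 2) Δt ρ (ν₀ * Δt) N := fun k hk hkN =>
    scheme_energy_step hν₀ hK₁.le hΔt (hkT k hkN) (hA (U k))
      (fun i hi => hω k i (mem_Icc.1 hi).1 (mem_Icc.1 hi).2 hkN) hB (hU k hk hkN (U k))
  have h := hstep.stability (fun _ => by positivity) (fun _ => by positivity)
    (fun _ => by positivity) (fun _ => by positivity) hν₀.le (by positivity) hΔt.le
    (hΔt_le.trans (min_le_left _ _)) hΔtρ hnN (hkT n hnN)
  rwa [sqrt_sq (norm_nonneg _)] at h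
end

section
/- Per-step H¹ energy estimate: Suppose a sequence (U^n)_{n=0}^N in H and data f^1,…,f^N ∈ H satisfy, for every 1 ≤ n ≤ N and every v ∈ H, ((U^n − U^{n−1})/Δt, v) + A(U^n, v) + Δt Σ_{i=1}^n ω_{n,i} B(U^i, v) = (f^n, v). Then for every 1 ≤ n ≤ N: ν₀ ‖U^n‖₁² ≤ (1/2) Δt ‖f^n‖² + (t_n μ₀² K₁² / ν₀) Δt Σ_{i=1}^n ‖U^i‖₁² + ν₁ ‖U^{n−1}‖₁². -/
open scoped BigOperators RealInnerProductSpace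

/-!
Test the scheme with `v = Uⁿ - Uⁿ⁻¹`. By symmetry of `A`, `2 A(Uⁿ, Uⁿ - Uⁿ⁻¹)` is
`A(Uⁿ, Uⁿ) - A(Uⁿ⁻¹, Uⁿ⁻¹) + A(Uⁿ - Uⁿ⁻¹, Uⁿ - Uⁿ⁻¹)`. Young's inequality with weight `Δt / 2`
lets the discrete time derivative absorb the forcing term, and Young's inequality with weight `ν₀`
lets the coercive part `A(Uⁿ - Uⁿ⁻¹, Uⁿ - Uⁿ⁻¹)` absorb the memory term, whose remainder is
controlled by Cauchy–Schwarz over the `n` quadrature nodes. Coercivity and continuity of `A`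
then convert the energies into `‖·‖₁`-norms.
-/

theorem LinearMap.two_mul_apply_sub_of_symm {R M : Type*} [CommRing R] [AddCommGroup M]
    [Module R M] (A : M →ₗ[R] M →ₗ[R] R) (hA : ∀ u v, A u v = A v u) (u w : M) :
    2 * A u (u - w) = A u u - A w w + A (u - w) (u - w) := by
  simp only [map_sub, LinearMap.sub_apply, hA w u]
  ring

theorem abs_sum_mul_le_mul_sum {ι : Type*} (s : Finset ι) {c b M : ι → ℝ} {K : ℝ}
    (hc : ∀ i ∈ s, |c i| ≤ K) (hb : ∀ i ∈ s, |b i| ≤ M i) :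
    |∑ i ∈ s, c i * b i| ≤ K * ∑ i ∈ s, M i := by
  rw [Finset.mul_sum]
  refine (Finset.abs_sum_le_sum_abs _ _).trans (Finset.sum_le_sum fun i hi => ?_)
  rw [abs_mul]
  exact mul_le_mul (hc i hi) (hb i hi) (abs_nonneg _) ((abs_nonneg _).trans (hc i hi))

theorem neg_two_mul_sum_mul_le {ι X : Type*} (s : Finset ι) (norm1 : X → ℝ)
    (B : X → X → ℝ) {μ K ν τ : ℝ} (hB : ∀ u v, |B u v| ≤ μ * norm1 u * norm1 v)
    (c : ι → ℝ) (hc : ∀ i ∈ s, |c i| ≤ K) (hν : 0 < ν) (hτ : 0 ≤ τ) (x : ι → X) (v : X) :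
    -(2 * τ * ∑ i ∈ s, c i * B (x i) v) ≤
      ν * norm1 v ^ 2 + (s.card * τ) * μ ^ 2 * K ^ 2 / ν * τ * ∑ i ∈ s, norm1 (x i) ^ 2 := by
  set G := ∑ i ∈ s, c i * B (x i) v
  set S := ∑ i ∈ s, norm1 (x i)
  have hG : |G| ≤ K * (μ * norm1 v * S) := by
    have := abs_sum_mul_le_mul_sum s hc fun i _ => (hB (x i) v).trans_eq (mul_right_comm _ _ _)
    rwa [← Finset.mul_sum] at this
  calc -(2 * τ * G) ≤ 2 * τ * |G| := by nlinarith [neg_abs_le G]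
    _ ≤ 2 * τ * (K * (μ * norm1 v * S)) := by gcongr
    _ = 2 * norm1 v * (τ * K * μ * S) := by ring
    _ ≤ ν * norm1 v ^ 2 + ν⁻¹ * (τ * K * μ * S) ^ 2 := two_mul_le_add_mul_sq hν
    _ = ν * norm1 v ^ 2 + ν⁻¹ * (τ * K * μ) ^ 2 * S ^ 2 := by ring
    _ ≤ ν * norm1 v ^ 2 + ν⁻¹ * (τ * K * μ) ^ 2 * (s.card * ∑ i ∈ s, norm1 (x i) ^ 2) := by
        gcongr
        exact sq_sum_le_card_mul_sum_sq
    _ = _ := by ring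

theorem two_mul_real_inner_le_add_div {E : Type*} [NormedAddCommGroup E]
    [InnerProductSpace ℝ E] {τ : ℝ} (hτ : 0 < τ) (x y : E) :
    2 * ⟪x, y⟫ ≤ τ / 2 * ‖x‖ ^ 2 + 2 * (‖y‖ ^ 2 / τ) :=
  calc 2 * ⟪x, y⟫ ≤ 2 * ‖x‖ * ‖y‖ := by linarith [real_inner_le_norm x y]
    _ ≤ τ / 2 * ‖x‖ ^ 2 + (τ / 2)⁻¹ * ‖y‖ ^ 2 := two_mul_le_add_mul_sq (half_pos hτ)
    _ = τ / 2 * ‖x‖ ^ 2 + 2 * (‖y‖ ^ 2 / τ) := by field_simp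

theorem per_step_H1_energy_estimate_general
    {H : Type*} [NormedAddCommGroup H] [InnerProductSpace ℝ H]
    (norm1 : H → ℝ)
    (A : H →ₗ[ℝ] H →ₗ[ℝ] ℝ) (ν₀ ν₁ : ℝ) (hν₀ : 0 < ν₀)
    (hsymm : ∀ u v, A u v = A v u)
    (hcoer : ∀ v, ν₀ * (norm1 v) ^ 2 ≤ A v v)
    (hcont : ∀ u v, |A u v| ≤ ν₁ * norm1 u * norm1 v)
    (Δt : ℝ) (hΔt : 0 < Δt) (N : ℕ)
    (ω : ℕ → ℕ → ℝ) (K₁ : ℝ)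
    (hω : ∀ n i, 1 ≤ i → i ≤ n → n ≤ N → |ω n i| ≤ K₁)
    (B : H → H → ℝ) (μ₀ : ℝ)
    (hB : ∀ u v, |B u v| ≤ μ₀ * norm1 u * norm1 v)
    (U f : ℕ → H)
    (hscheme : ∀ n, 1 ≤ n → n ≤ N → ∀ v : H,
      ⟪U n - U (n - 1), v⟫ / Δt + A (U n) v
        + Δt * ∑ i ∈ Finset.Icc 1 n, ω n i * B (U i) v = ⟪f n, v⟫) :
    ∀ n, 1 ≤ n → n ≤ N →
      ν₀ * (norm1 (U n)) ^ 2 ≤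
        (1 / 2) * Δt * ‖f n‖ ^ 2
          + (((n : ℝ) * Δt) * μ₀ ^ 2 * K₁ ^ 2 / ν₀) * Δt
              * ∑ i ∈ Finset.Icc 1 n, (norm1 (U i)) ^ 2
          + ν₁ * (norm1 (U (n - 1))) ^ 2 := by
  intro n hn hnN
  set d := U n - U (n - 1)
  have htested : ‖d‖ ^ 2 / Δt + A (U n) d
      + Δt * ∑ i ∈ Finset.Icc 1 n, ω n i * B (U i) d = ⟪f n, d⟫ := by
    rw [← real_inner_self_eq_norm_sq]
    exact hscheme n hn hnN d
  have hmemory := neg_two_mul_sum_mul_le (Finset.Icc 1 n) norm1 B hB (ω n)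
    (fun i hi => hω n i (Finset.mem_Icc.1 hi).1 (Finset.mem_Icc.1 hi).2 hnN) hν₀ hΔt.le U d
  rw [Nat.card_Icc, Nat.add_sub_cancel] at hmemory
  have hpolar : 2 * A (U n) d = A (U n) (U n) - A (U (n - 1)) (U (n - 1)) + A d d :=
    LinearMap.two_mul_apply_sub_of_symm A hsymm (U n) (U (n - 1))
  linarith [two_mul_real_inner_le_add_div hΔt (f n) d, hcoer (U n), hcoer d,
    le_abs_self (A (U (n - 1)) (U (n - 1))), hcont (U (n - 1)) (U (n - 1))]

/-- Per-step H¹ energy estimate (3.14). -/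
theorem per_step_H1_energy_estimate
    {H : Type*} [NormedAddCommGroup H] [InnerProductSpace ℝ H]
    (norm1 : H → ℝ) (hnorm1 : ∀ x, 0 ≤ norm1 x)
    (A : H →ₗ[ℝ] H →ₗ[ℝ] ℝ) (ν₀ ν₁ : ℝ) (hν₀ : 0 < ν₀) (hν₁ : 0 < ν₁)
    (hsymm : ∀ u v, A u v = A v u)
    (hcoer : ∀ v, ν₀ * (norm1 v) ^ 2 ≤ A v v)
    (hcont : ∀ u v, |A u v| ≤ ν₁ * norm1 u * norm1 v)
    (Δt : ℝ) (hΔt : 0 < Δt) (N : ℕ) (hN : 1 ≤ N)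
    (ω : ℕ → ℕ → ℝ) (K₁ : ℝ) (hK₁ : 0 < K₁)
    (hω : ∀ n i, 1 ≤ i → i ≤ n → n ≤ N → |ω n i| ≤ K₁)
    (B : H → H → ℝ) (μ₀ : ℝ) (hμ₀ : 0 < μ₀)
    (hB : ∀ u v, |B u v| ≤ μ₀ * norm1 u * norm1 v)
    (U f : ℕ → H)
    (hscheme : ∀ n, 1 ≤ n → n ≤ N → ∀ v : H,
      ⟪U n - U (n - 1), v⟫ / Δt + A (U n) v
        + Δt * ∑ i ∈ Finset.Icc 1 n, ω n i * B (U i) v = ⟪f n, v⟫) :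
    ∀ n, 1 ≤ n → n ≤ N →
      ν₀ * (norm1 (U n)) ^ 2 ≤
        (1 / 2) * Δt * ‖f n‖ ^ 2
          + (((n : ℝ) * Δt) * μ₀ ^ 2 * K₁ ^ 2 / ν₀) * Δt
              * ∑ i ∈ Finset.Icc 1 n, (norm1 (U i)) ^ 2
          + ν₁ * (norm1 (U (n - 1))) ^ 2 :=
  per_step_H1_energy_estimate_general norm1 A ν₀ ν₁ hν₀ hsymm hcoer hcont Δt hΔt N ω K₁ hω B μ₀ hB U
    f hscheme
end
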